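/- Suppose X and Y are independent, nonnegative, bounded random variables such that Y^X has the same distribution as X. Let a = inf(supp(X)) and b = sup(supp(X)), and assume 0 < a and b < ∞. Then inf(supp(Y)) = max(a^{1/a}, a^{1/b}) and sup(supp(Y)) = min(b^{1/a}, b^{1/b}). -/

import Mathlib

open MeasureTheory ProbabilityTheory Set

/-- The topological support of a measure on `ℝ`: points all of whose open
neighborhoods have positive measure. -/
def mSupport (μ : Measure ℝ) : Set ℝ :=
  {x | ∀ U : Set ℝ, IsOpen U → x ∈ U → 0 < μ U}

/-!
Independence makes the law of `(Y, X)` a product measure, whose support contains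
`supp Y × supp X`. As `(y, x) ↦ y ^ x` is continuous wherever `x > 0`, every `y ^ x` with
`y ∈ supp Y`, `x ∈ supp X` lies in the support of the law of `Y ^ X`, which is
`supp X ⊆ [a, b]`.
For `c = inf supp Y` this gives `a ≤ c ^ a` and `a ≤ c ^ b`. Conversely `Y ≥ c` and
`X ∈ [a, b]` almost surely, so `Y ^ X ≥ min (c ^ a) (c ^ b)` almost surely, whence
`a ≥ min (c ^ a) (c ^ b)`. Thus `min (c ^ a) (c ^ b) = a`, which determines `c`; the upper
endpoint is symmetric.
-/

lemma mSupport_eq_support (μ : Measure ℝ) : mSupport μ = μ.support := by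
  rw [Measure.support_eq_forall_isOpen]
  exact Set.ext fun _ => forall_congr' fun _ => imp.swap

namespace MeasureTheory.Measure

variable {α β : Type*} [TopologicalSpace α] [MeasurableSpace α]
  [TopologicalSpace β] [MeasurableSpace β]

lemma mk_mem_support_prod {μ : Measure α} {ν : Measure β} [SFinite ν] {x : α} {y : β}
    (hx : x ∈ μ.support) (hy : y ∈ ν.support) : (x, y) ∈ (μ.prod ν).support := by
  rw [((nhds_basis_opens x).prod_nhds (nhds_basis_opens y)).mem_measureSupport]
  rintro ⟨u, v⟩ ⟨⟨hxu, hu⟩, hyv, hv⟩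
  rw [prod_prod]
  exact ENNReal.mul_pos ((mem_support_iff_forall x).1 hx u (hu.mem_nhds hxu)).ne'
    ((mem_support_iff_forall y).1 hy v (hv.mem_nhds hyv)).ne'

lemma apply_mem_support_map [OpensMeasurableSpace β] {μ : Measure α} {f : α → β}
    (hf : Measurable f) {x : α} (hx : x ∈ μ.support) (hcont : ContinuousAt f x) :
    f x ∈ (μ.map f).support := by
  rw [(nhds_basis_opens (f x)).mem_measureSupport]
  rintro W ⟨hxW, hW⟩
  rw [map_apply hf hW.measurableSet]
  exact (mem_support_iff_forall x).1 hx _ (hcont.preimage_mem_nhds (hW.mem_nhds hxW))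

end MeasureTheory.Measure

namespace ProbabilityTheory.IndepFun

variable {Ω α β γ : Type*} [MeasurableSpace Ω] {P : Measure Ω} [IsFiniteMeasure P]
  [TopologicalSpace α] [MeasurableSpace α] [TopologicalSpace β] [MeasurableSpace β]
  [TopologicalSpace γ] [MeasurableSpace γ] [OpensMeasurableSpace γ]

lemma apply_mem_support_map {X : Ω → α} {Y : Ω → β} (hX : Measurable X) (hY : Measurable Y)
    (hXY : IndepFun X Y P) {f : α × β → γ} (hf : Measurable f) {x : α} {y : β}
    (hx : x ∈ (P.map X).support) (hy : y ∈ (P.map Y).support) (hcont : ContinuousAt f (x, y)) :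
    f (x, y) ∈ (P.map fun ω => f (X ω, Y ω)).support := by
  change f (x, y) ∈ (P.map (f ∘ fun ω => (X ω, Y ω))).support
  rw [← Measure.map_map hf (hX.prodMk hY),
    hXY.map_prod_eq_prod_map_map hX.aemeasurable hY.aemeasurable]
  exact Measure.apply_mem_support_map hf (Measure.mk_mem_support_prod hx hy) hcont

end ProbabilityTheory.IndepFun

section LawOfRealVariable

variable {Ω : Type*} [MeasurableSpace Ω] {P : Measure Ω} {Z : Ω → ℝ}

lemma support_map_nonempty [NeZero P] (hZ : AEMeasurable Z P) : (P.map Z).support.Nonempty :=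
  Measure.nonempty_support ((Measure.map_ne_zero_iff hZ).2 (NeZero.ne P))

lemma support_map_subset_Ici (hZ : AEMeasurable Z P) {t : ℝ} (h : ∀ᵐ ω ∂P, t ≤ Z ω) :
    (P.map Z).support ⊆ Ici t :=
  Measure.support_subset_of_isClosed isClosed_Ici ((ae_map_iff hZ measurableSet_Ici).2 h)

lemma support_map_subset_Iic (hZ : AEMeasurable Z P) {t : ℝ} (h : ∀ᵐ ω ∂P, Z ω ≤ t) :
    (P.map Z).support ⊆ Iic t :=
  Measure.support_subset_of_isClosed isClosed_Iic ((ae_map_iff hZ measurableSet_Iic).2 h)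

lemma le_csInf_support_map [NeZero P] (hZ : AEMeasurable Z P) {t : ℝ}
    (h : ∀ᵐ ω ∂P, t ≤ Z ω) : t ≤ sInf (P.map Z).support :=
  le_csInf (support_map_nonempty hZ) (support_map_subset_Ici hZ h)

lemma csSup_support_map_le [NeZero P] (hZ : AEMeasurable Z P) {t : ℝ}
    (h : ∀ᵐ ω ∂P, Z ω ≤ t) : sSup (P.map Z).support ≤ t :=
  csSup_le (support_map_nonempty hZ) (support_map_subset_Iic hZ h)

lemma ae_csInf_support_map_le (hZ : AEMeasurable Z P) (h : BddBelow (P.map Z).support) :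
    ∀ᵐ ω ∂P, sInf (P.map Z).support ≤ Z ω :=
  ae_of_ae_map hZ <| Filter.mem_of_superset Measure.support_mem_ae fun _ => csInf_le h

lemma ae_le_csSup_support_map (hZ : AEMeasurable Z P) (h : BddAbove (P.map Z).support) :
    ∀ᵐ ω ∂P, Z ω ≤ sSup (P.map Z).support :=
  ae_of_ae_map hZ <| Filter.mem_of_superset Measure.support_mem_ae fun _ => le_csSup h

lemma csInf_support_map_mem [NeZero P] (hZ : AEMeasurable Z P)
    (h : BddBelow (P.map Z).support) : sInf (P.map Z).support ∈ (P.map Z).support :=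
  Measure.isClosed_support.csInf_mem (support_map_nonempty hZ) h

lemma csSup_support_map_mem [NeZero P] (hZ : AEMeasurable Z P)
    (h : BddAbove (P.map Z).support) : sSup (P.map Z).support ∈ (P.map Z).support :=
  Measure.isClosed_support.csSup_mem (support_map_nonempty hZ) h

end LawOfRealVariable

namespace Real

lemma min_rpow_le_rpow_of_mem_Icc {a b c x y : ℝ} (hc : 0 ≤ c) (hcy : c ≤ y) (ha : 0 ≤ a)
    (hx : x ∈ Icc a b) : min (c ^ a) (c ^ b) ≤ y ^ x := by
  refine le_trans ?_ (rpow_le_rpow hc hcy (ha.trans hx.1))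
  rcases le_total 1 c with h1c | hc1
  · exact min_le_of_left_le (rpow_le_rpow_of_exponent_le h1c hx.1)
  · exact min_le_of_right_le (rpow_le_rpow_of_exponent_ge' hc hc1 (ha.trans hx.1) hx.2)

lemma rpow_le_max_rpow_of_mem_Icc {a b d x y : ℝ} (hy : 0 ≤ y) (hyd : y ≤ d) (ha : 0 ≤ a)
    (hx : x ∈ Icc a b) : y ^ x ≤ max (d ^ a) (d ^ b) := by
  refine (rpow_le_rpow hy hyd (ha.trans hx.1)).trans ?_
  rcases le_total 1 d with h1d | hd1
  · exact le_max_of_le_right (rpow_le_rpow_of_exponent_le h1d hx.2)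
  · exact le_max_of_le_left (rpow_le_rpow_of_exponent_ge' (hy.trans hyd) hd1 ha hx.1)

lemma eq_max_rpow_one_div_of_min_rpow_eq {a c x y : ℝ} (ha : 0 ≤ a) (hc : 0 ≤ c) (hx : 0 < x)
    (hy : 0 < y) (h : min (c ^ x) (c ^ y) = a) : c = max (a ^ (1 / x)) (a ^ (1 / y)) := by
  simp only [one_div]
  refine le_antisymm ?_ (max_le ((rpow_inv_le_iff_of_pos ha hc hx).2 (h ▸ min_le_left _ _))
    ((rpow_inv_le_iff_of_pos ha hc hy).2 (h ▸ min_le_right _ _)))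
  rcases min_le_iff.1 h.le with h' | h'
  · exact le_max_of_le_left ((le_rpow_inv_iff_of_pos hc ha hx).2 h')
  · exact le_max_of_le_right ((le_rpow_inv_iff_of_pos hc ha hy).2 h')

lemma eq_min_rpow_one_div_of_max_rpow_eq {b d x y : ℝ} (hb : 0 ≤ b) (hd : 0 ≤ d) (hx : 0 < x)
    (hy : 0 < y) (h : max (d ^ x) (d ^ y) = b) : d = min (b ^ (1 / x)) (b ^ (1 / y)) := by
  simp only [one_div]
  refine le_antisymm (le_min ((le_rpow_inv_iff_of_pos hd hb hx).2 (h ▸ le_max_left _ _))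
    ((le_rpow_inv_iff_of_pos hd hb hy).2 (h ▸ le_max_right _ _))) ?_
  rcases le_max_iff.1 h.ge with h' | h'
  · exact min_le_of_left_le ((rpow_inv_le_iff_of_pos hb hd hx).2 h')
  · exact min_le_of_right_le ((rpow_inv_le_iff_of_pos hb hd hy).2 h')

end Real

section PowerFixedPoint

variable {Ω : Type*} [MeasurableSpace Ω] {P : Measure Ω} [NeZero P] {X Y : Ω → ℝ}

lemma csInf_support_map_eq_max_rpow (hX : Measurable X) (hY : Measurable Y)
    (hfix : P.map (fun ω => Y ω ^ X ω) = P.map X)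
    (hpow : ∀ y ∈ (P.map Y).support, ∀ x ∈ (P.map X).support, y ^ x ∈ (P.map X).support)
    (hY0 : (P.map Y).support ⊆ Ici 0) (ha : 0 < sInf (P.map X).support)
    (hXbdd : BddBelow (P.map X).support) (hb : BddAbove (P.map X).support) :
    sInf (P.map Y).support = max ((sInf (P.map X).support) ^ (1 / sInf (P.map X).support))
      ((sInf (P.map X).support) ^ (1 / sSup (P.map X).support)) := by
  set a := sInf (P.map X).support
  set b := sSup (P.map X).support
  set c := sInf (P.map Y).support
  have haS : a ∈ (P.map X).support := csInf_support_map_mem hX.aemeasurable hXbdd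
  have hbS : b ∈ (P.map X).support := csSup_support_map_mem hX.aemeasurable hb
  have hcS : c ∈ (P.map Y).support := csInf_support_map_mem hY.aemeasurable ⟨0, hY0⟩
  refine Real.eq_max_rpow_one_div_of_min_rpow_eq ha.le (hY0 hcS) ha
    (ha.trans_le (le_csSup hb haS)) (le_antisymm ?_
      (le_min (csInf_le hXbdd (hpow c hcS a haS)) (csInf_le hXbdd (hpow c hcS b hbS))))
  calc min (c ^ a) (c ^ b) ≤ sInf (P.map fun ω => Y ω ^ X ω).support :=
        le_csInf_support_map (hY.pow hX).aemeasurable <| by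
          filter_upwards [ae_csInf_support_map_le hX.aemeasurable hXbdd,
            ae_le_csSup_support_map hX.aemeasurable hb,
            ae_csInf_support_map_le hY.aemeasurable ⟨0, hY0⟩] with ω haX hXb hcY
          exact Real.min_rpow_le_rpow_of_mem_Icc (hY0 hcS) hcY ha.le ⟨haX, hXb⟩
    _ = a := by rw [hfix]

lemma csSup_support_map_eq_min_rpow (hX : Measurable X) (hY : Measurable Y)
    (hfix : P.map (fun ω => Y ω ^ X ω) = P.map X)
    (hpow : ∀ y ∈ (P.map Y).support, ∀ x ∈ (P.map X).support, y ^ x ∈ (P.map X).support)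
    (hY0 : (P.map Y).support ⊆ Ici 0) (hYbdd : BddAbove (P.map Y).support)
    (ha : 0 < sInf (P.map X).support) (hXbdd : BddBelow (P.map X).support)
    (hb : BddAbove (P.map X).support) :
    sSup (P.map Y).support = min ((sSup (P.map X).support) ^ (1 / sInf (P.map X).support))
      ((sSup (P.map X).support) ^ (1 / sSup (P.map X).support)) := by
  set a := sInf (P.map X).support
  set b := sSup (P.map X).support
  set d := sSup (P.map Y).support
  have haS : a ∈ (P.map X).support := csInf_support_map_mem hX.aemeasurable hXbdd
  have hbS : b ∈ (P.map X).support := csSup_support_map_mem hX.aemeasurable hb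
  have hdS : d ∈ (P.map Y).support := csSup_support_map_mem hY.aemeasurable hYbdd
  have hb0 : 0 < b := ha.trans_le (le_csSup hb haS)
  refine Real.eq_min_rpow_one_div_of_max_rpow_eq hb0.le (hY0 hdS) ha hb0
    (le_antisymm (max_le (le_csSup hb (hpow d hdS a haS)) (le_csSup hb (hpow d hdS b hbS))) ?_)
  calc b = sSup (P.map fun ω => Y ω ^ X ω).support := by rw [hfix]
    _ ≤ max (d ^ a) (d ^ b) := csSup_support_map_le (hY.pow hX).aemeasurable <| by
          filter_upwards [ae_csInf_support_map_le hX.aemeasurable hXbdd,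
            ae_le_csSup_support_map hX.aemeasurable hb,
            ae_le_csSup_support_map hY.aemeasurable hYbdd,
            ae_of_ae_map hY.aemeasurable (Filter.mem_of_superset Measure.support_mem_ae hY0)]
            with ω haX hXb hYd hY0ω
          exact Real.rpow_le_max_rpow_of_mem_Icc hY0ω hYd ha.le ⟨haX, hXb⟩

end PowerFixedPoint

theorem stmt_18_general {Ω : Type*} [MeasurableSpace Ω] (P : Measure Ω) [IsProbabilityMeasure P]
    (X Y : Ω → ℝ) (hX : Measurable X) (hY : Measurable Y)
    (hXnonneg : ∀ᵐ ω ∂P, 0 ≤ X ω) (hYnonneg : ∀ᵐ ω ∂P, 0 ≤ Y ω)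
    (hindep : IndepFun X Y P)
    (hfix : Measure.map (fun ω => Y ω ^ X ω) P = Measure.map X P)
    (ha : 0 < sInf (mSupport (Measure.map X P)))
    (hb : BddAbove (mSupport (Measure.map X P))) :
    sInf (mSupport (Measure.map Y P)) =
      max ((sInf (mSupport (Measure.map X P))) ^ (1 / sInf (mSupport (Measure.map X P))))
        ((sInf (mSupport (Measure.map X P))) ^ (1 / sSup (mSupport (Measure.map X P)))) ∧
    sSup (mSupport (Measure.map Y P)) =
      min ((sSup (mSupport (Measure.map X P))) ^ (1 / sInf (mSupport (Measure.map X P))))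
        ((sSup (mSupport (Measure.map X P))) ^ (1 / sSup (mSupport (Measure.map X P)))) := by
  simp only [mSupport_eq_support] at ha hb ⊢
  have hXbdd : BddBelow (P.map X).support := ⟨0, support_map_subset_Ici hX.aemeasurable hXnonneg⟩
  have hY0 := support_map_subset_Ici hY.aemeasurable hYnonneg
  have hpow : ∀ y ∈ (P.map Y).support, ∀ x ∈ (P.map X).support, y ^ x ∈ (P.map X).support :=
    fun y hy x hx => hfix ▸ hindep.symm.apply_mem_support_map hY hX
      (measurable_fst.pow measurable_snd) hy hx
      (Real.continuousAt_rpow _ (Or.inr (ha.trans_le (csInf_le hXbdd hx))))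
  have haS := csInf_support_map_mem hX.aemeasurable hXbdd
  -- `y ^ a ∈ supp X` forces `y ≤ b ^ a⁻¹`
  have hYbdd : BddAbove (P.map Y).support := ⟨_, fun y hy =>
    (Real.le_rpow_inv_iff_of_pos (hY0 hy) (ha.le.trans (le_csSup hb haS)) ha).2
      (le_csSup hb (hpow y hy _ haS))⟩
  exact ⟨csInf_support_map_eq_max_rpow hX hY hfix hpow hY0 ha hXbdd hb,
    csSup_support_map_eq_min_rpow hX hY hfix hpow hY0 hYbdd ha hXbdd hb⟩

theorem stmt_18 {Ω : Type*} [MeasurableSpace Ω] (P : Measure Ω) [IsProbabilityMeasure P]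
    (X Y : Ω → ℝ) (hX : Measurable X) (hY : Measurable Y)
    (hXnonneg : ∀ᵐ ω ∂P, 0 ≤ X ω) (hYnonneg : ∀ᵐ ω ∂P, 0 ≤ Y ω)
    (hXbdd : ∃ C : ℝ, ∀ᵐ ω ∂P, X ω ≤ C) (hYbdd : ∃ C : ℝ, ∀ᵐ ω ∂P, Y ω ≤ C)
    (hindep : IndepFun X Y P)
    (hfix : Measure.map (fun ω => Y ω ^ X ω) P = Measure.map X P)
    (ha : 0 < sInf (mSupport (Measure.map X P)))
    (hb : BddAbove (mSupport (Measure.map X P))) :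
    sInf (mSupport (Measure.map Y P)) =
      max ((sInf (mSupport (Measure.map X P))) ^ (1 / sInf (mSupport (Measure.map X P))))
        ((sInf (mSupport (Measure.map X P))) ^ (1 / sSup (mSupport (Measure.map X P)))) ∧
    sSup (mSupport (Measure.map Y P)) =
      min ((sSup (mSupport (Measure.map X P))) ^ (1 / sInf (mSupport (Measure.map X P))))
        ((sSup (mSupport (Measure.map X P))) ^ (1 / sSup (mSupport (Measure.map X P)))) :=
  stmt_18_general P X Y hX hY hXnonneg hYnonneg hindep hfix ha hb
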